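/- arXiv:2103.15030 — 3 statements merged into one kernel-verified Lean document; each statement's English description precedes it below -/
import Mathlib

section
/- Let l be a prime, ε ∈ {1, −1}, and q ≥ 2 an integer with l ∤ q. Let n ≥ 2 be an integer with l | q − ε and l ≥ n. Let m ≥ 1 and let α₁ ≤ α₂ ≤ ⋯ ≤ α_m be positive integers with α₁ + ⋯ + α_m = n, and set λ_i = α_i + i − 1 for 1 ≤ i ≤ m. Let e be any natural number and define the nonzero rational number D = [ ∏_{k=1}^{n} (q^k − ε^k) · ∏_{1 ≤ i' < i ≤ m} (q^{λ_i} − ε^{i+i'} q^{λ_{i'}}) ] / [ q^e · ∏_{i=1}^{m} ∏_{k=1}^{λ_i} (q^k − ε^k) ]. Let N = q^{n(n−1)/2} · ∏_{k=2}^{n} (q^k − ε^k). Then ν_l(N) − ν_l(D) ≥ (n−1) · ν_l(q − ε) > 0; in particular ν_l(D) < ν_l(N). (Here N is the order of SL_n(q) if ε = 1 and of SU_n(q) if ε = −1, D is the degree of the unipotent character of SL_n^ε(q) labelled by the partition α, and the conclusion says that this character is not of l-defect zero.) -/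
open Finset

noncomputable def vv (p : ℕ) (z : ℤ) : ℤ := padicValRat p (z : ℚ)

section helpers
variable {p : ℕ} [hp : Fact p.Prime]

lemma val_prod' {ι : Type*} {s : Finset ι} {f : ι → ℚ} (h : ∀ i ∈ s, f i ≠ 0) :
    padicValRat p (∏ i ∈ s, f i) = ∑ i ∈ s, padicValRat p (f i) := by
  classical
  induction s using Finset.induction_on with
  | empty => simp [padicValRat.one]
  | insert _ _ hx ih =>
    rename_i a s
    rw [Finset.prod_insert hx, Finset.sum_insert hx,
      padicValRat.mul (h a (by simp)) (Finset.prod_ne_zero_iff.2 fun i hi => h i (by simp [hi])),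
      ih fun i hi => h i (by simp [hi])]

omit hp in
lemma vv_nonneg (z : ℤ) : 0 ≤ vv p z := by
  rw [vv, padicValRat.of_int]; exact Int.ofNat_nonneg _

lemma vv_mul {a b : ℤ} (ha : a ≠ 0) (hb : b ≠ 0) : vv p (a * b) = vv p a + vv p b := by
  rw [vv, vv, vv]
  have : ((a * b : ℤ) : ℚ) = (a : ℚ) * (b : ℚ) := by push_cast; ring
  rw [this, padicValRat.mul (by exact_mod_cast ha) (by exact_mod_cast hb)]

lemma vv_dvd_le {a b : ℤ} (ha : a ≠ 0) (hb : b ≠ 0) (h : a ∣ b) : vv p a ≤ vv p b := by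
  obtain ⟨c, rfl⟩ := h
  have hc : c ≠ 0 := by rintro rfl; simp at hb
  rw [vv_mul ha hc]
  have := vv_nonneg (p := p) c
  linarith

lemma vv_one_le {z : ℤ} (hz : z ≠ 0) (h : (p : ℤ) ∣ z) : 1 ≤ vv p z := by
  have h1 : vv p (p : ℤ) = 1 := by
    rw [vv, padicValRat.of_int]; norm_cast; simp [padicValInt.self, hp.out.one_lt]
  calc (1 : ℤ) = vv p (p : ℤ) := h1.symm
    _ ≤ _ := vv_dvd_le (by exact_mod_cast hp.out.ne_zero) hz h

omit hp in
lemma vv_zero_of_not_dvd {z : ℤ} (h : ¬ (p : ℤ) ∣ z) : vv p z = 0 := by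
  rw [vv, padicValRat.of_int, padicValInt.eq_zero_of_not_dvd h]; rfl

omit hp in
lemma vv_unit_mul {u : ℤ} (hu : u = 1 ∨ u = -1) (t : ℤ) : vv p (u * t) = vv p t := by
  rcases hu with rfl | rfl
  · rw [one_mul]
  · rw [vv, vv]
    have : ((-1 * t : ℤ) : ℚ) = -(t : ℚ) := by push_cast; ring
    rw [this, padicValRat.neg]

lemma vv_pow_zero {q : ℤ} (hq : ¬ (p : ℤ) ∣ q) (k : ℕ) : vv p (q ^ k) = 0 := by
  refine vv_zero_of_not_dvd fun h => hq ?_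
  exact (Nat.prime_iff_prime_int.mp hp.out).dvd_of_dvd_pow h

end helpers

section cross
variable {p : ℕ} [hp : Fact p.Prime] {q ε : ℤ}

omit hp in
lemma eps_pow (hε : ε = 1 ∨ ε = -1) (s : ℕ) : ε ^ s = 1 ∨ ε ^ s = -1 := by
  rcases hε with rfl | rfl
  · left; simp
  · rcases Nat.even_or_odd s with h | h
    · left; exact h.neg_one_pow
    · right; exact h.neg_one_pow

omit hp in
lemma qpow_ge (hq : 2 ≤ q) {k : ℕ} (hk : 1 ≤ k) : 2 ≤ q ^ k :=
  le_trans hq (le_self_pow₀ (by omega) (by omega))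

omit hp in
lemma qpow_sub_unit_ne (hq : 2 ≤ q) {k : ℕ} (hk : 1 ≤ k) {u : ℤ} (hu : u = 1 ∨ u = -1) :
    q ^ k - u ≠ 0 := by
  have h2 := qpow_ge hq hk
  rcases hu with rfl | rfl <;> omega

omit hp in
lemma xpow_sub_one_ne (hε : ε = 1 ∨ ε = -1) (hq : 2 ≤ q) {k : ℕ} (hk : 1 ≤ k) :
    (ε * q) ^ k - 1 ≠ 0 := by
  have h2 := qpow_ge hq hk
  rw [mul_pow]
  rcases eps_pow hε k with h | h <;> rw [h] <;> omega

/-- `ν(q^k - ε^k) = ν((εq)^k - 1)`. -/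
lemma vv_q_eps (hε : ε = 1 ∨ ε = -1) (k : ℕ) :
    vv p (q ^ k - ε ^ k) = vv p ((ε * q) ^ k - 1) := by
  have hid : q ^ k - ε ^ k = ε ^ k * ((ε * q) ^ k - 1) := by
    have h2 : ε ^ k * ε ^ k = 1 := by
      rcases eps_pow hε k with h | h <;> rw [h] <;> ring
    linear_combination (-(q ^ k)) * h2
  rw [hid, vv_unit_mul (eps_pow hε k) _]

/-- The key cross-term bound. -/
lemma cross_val_le (hε : ε = 1 ∨ ε = -1) (hq : 2 ≤ q)
    (hlq : ¬ (p : ℤ) ∣ q) (hdvd : (p : ℤ) ∣ ε * q - 1) {A B d s : ℕ}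
    (hd : 1 ≤ d) (hBd : B + d = A) (hps : Even (d + s) ∨ 3 ≤ p) :
    vv p (q ^ A - ε ^ s * q ^ B) ≤ vv p ((ε * q) ^ d - 1) := by
  have hq0 : q ≠ 0 := by omega
  have hqB : (q : ℤ) ^ B ≠ 0 := pow_ne_zero _ hq0
  have hne : q ^ d - ε ^ s ≠ 0 := qpow_sub_unit_ne hq hd (eps_pow hε s)
  have hid : q ^ A - ε ^ s * q ^ B = q ^ B * (q ^ d - ε ^ s) := by
    rw [← hBd, pow_add]; ring
  rw [hid, vv_mul hqB hne, vv_pow_zero hlq, zero_add]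
  rcases hε with rfl | rfl
  · simp
  · rcases Nat.even_or_odd (d + s) with hpar | hpar
    ·
      have hsd : (-1 : ℤ) ^ s = (-1) ^ d := by
        rcases Nat.even_or_odd d with h | h
        · have hs : Even s := by
            rcases Nat.even_iff.mp hpar, Nat.even_iff.mp h with ⟨h1, h2⟩
            exact Nat.even_iff.mpr (by omega)
          rw [h.neg_one_pow, hs.neg_one_pow]
        · have hs : Odd s := by
            have := Nat.even_iff.mp hpar; have := Nat.odd_iff.mp h
            exact Nat.odd_iff.mpr (by omega)
          rw [h.neg_one_pow, hs.neg_one_pow]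
      have hid2 : q ^ d - (-1 : ℤ) ^ s = (-1) ^ d * ((-1 * q) ^ d - 1) := by
        rw [hsd, mul_pow]
        have hdd : (-1 : ℤ) ^ d * (-1) ^ d = 1 := by
          rcases eps_pow (Or.inr rfl) d with h | h <;> rw [h] <;> ring
        linear_combination (-(q ^ d)) * hdd
      rw [hid2, vv_unit_mul (eps_pow (Or.inr rfl) d) _]
    · -- odd case: value is ν(x^d + 1) = 0
      have hp3 : 3 ≤ p := by
        rcases hps with h | h
        · exact absurd h (by simpa using hpar)
        · exact h
      have hsd : (-1 : ℤ) ^ s = -(-1) ^ d := by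
        rcases Nat.even_or_odd d with h | h
        · have hs : Odd s := by
            have := Nat.odd_iff.mp hpar; have := Nat.even_iff.mp h
            exact Nat.odd_iff.mpr (by omega)
          rw [h.neg_one_pow, hs.neg_one_pow]
        · have hs : Even s := by
            have := Nat.odd_iff.mp hpar; have := Nat.odd_iff.mp h
            exact Nat.even_iff.mpr (by omega)
          rw [h.neg_one_pow, hs.neg_one_pow]; norm_num
      have hid2 : q ^ d - (-1 : ℤ) ^ s = (-1) ^ d * ((-1 * q) ^ d + 1) := by
        rw [hsd, mul_pow]
        have hdd : (-1 : ℤ) ^ d * (-1) ^ d = 1 := by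
          rcases eps_pow (Or.inr rfl) d with h | h <;> rw [h] <;> ring
        linear_combination (-(q ^ d)) * hdd
      have hnotdvd : ¬ (p : ℤ) ∣ (-1 * q) ^ d + 1 := by
        intro hdd
        have h1 : (p : ℤ) ∣ (-1 * q) ^ d - 1 :=
          dvd_trans hdvd (by simpa using sub_dvd_pow_sub_pow (-1 * q) 1 d)
        have h2 : (p : ℤ) ∣ 2 := by
          have := dvd_sub hdd h1
          simpa using this
        have hnd : (p : ℕ) ∣ 2 := by exact_mod_cast h2
        have := Nat.le_of_dvd (by norm_num) hnd
        omega
      rw [hid2, vv_unit_mul (eps_pow (Or.inr rfl) d) _, vv_zero_of_not_dvd hnotdvd]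
      exact vv_nonneg _
end cross

/-- **Unipotent characters of `SL_n^ε(q)` are never of `l`-defect zero** (`l | q − ε`, `l ≥ n`).
Here `N = q^{n(n−1)/2} ∏_{k=2}^{n} (q^k − ε^k)` is the group order,
`D` is the degree of the unipotent character labelled by the partition `α₁ ≤ ⋯ ≤ α_m` of `n`
(with `λ_i = α_i + i − 1`, written `0`-based as `lam i = α i + i`), and `ν_l` is the `l`-adic
valuation. Then `ν_l(N) − ν_l(D) ≥ (n−1)·ν_l(q−ε) > 0`, so in particular `ν_l(D) < ν_l(N)`. -/
theorem SL_no_defect_zero_unipotent_character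
    (l : ℕ) (hl : l.Prime) (ε : ℤ) (hε : ε = 1 ∨ ε = -1)
    (q : ℤ) (hq : 2 ≤ q) (hlq : ¬ (l : ℤ) ∣ q)
    (n : ℕ) (hn : 2 ≤ n) (hdvd : (l : ℤ) ∣ q - ε) (hln : n ≤ l)
    (m : ℕ) (hm : 1 ≤ m) (α : Fin m → ℕ) (hα : ∀ i, 1 ≤ α i)
    (hmono : Monotone α) (hsum : ∑ i, α i = n)
    (lam : Fin m → ℕ) (hlam : ∀ i, lam i = α i + (i : ℕ))
    (e : ℕ) (D N : ℚ)
    (hD : D = ((∏ k ∈ Icc 1 n, ((q : ℚ) ^ k - (ε : ℚ) ^ k)) *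
        ∏ i : Fin m, ∏ i' ∈ Iio i,
          ((q : ℚ) ^ (lam i) - (ε : ℚ) ^ (((i : ℕ) + 1) + ((i' : ℕ) + 1)) * (q : ℚ) ^ (lam i'))) /
      ((q : ℚ) ^ e * ∏ i : Fin m, ∏ k ∈ Icc 1 (lam i), ((q : ℚ) ^ k - (ε : ℚ) ^ k)))
    (hN : N = (q : ℚ) ^ (n * (n - 1) / 2) * ∏ k ∈ Icc 2 n, ((q : ℚ) ^ k - (ε : ℚ) ^ k)) :
    ((n : ℤ) - 1) * padicValRat l ((q : ℚ) - (ε : ℚ)) ≤ padicValRat l N - padicValRat l D ∧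
    0 < ((n : ℤ) - 1) * padicValRat l ((q : ℚ) - (ε : ℚ)) ∧
    padicValRat l D < padicValRat l N := by
  classical
  haveI : Fact l.Prime := ⟨hl⟩
  have hq0 : q ≠ 0 := by omega
  have hqQ0 : (q : ℚ) ≠ 0 := by exact_mod_cast hq0
  have hε2 : ε * ε = 1 := by rcases hε with rfl | rfl <;> norm_num
  have heq1 : ε * (q - ε) = ε * q - 1 := by linear_combination (-1 : ℤ) * hε2
  have hdvdx : (l : ℤ) ∣ ε * q - 1 := by rw [← heq1]; exact hdvd.mul_left ε
  have hqε0 : q - ε ≠ 0 := by rcases hε with rfl | rfl <;> omega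
  have hx10 : ε * q - 1 ≠ 0 := by rw [← heq1]; rcases hε with rfl | rfl <;> simp <;> omega
  have haQ : ((q - ε : ℤ) : ℚ) = (q : ℚ) - (ε : ℚ) := by push_cast; ring
  have ha_vv : padicValRat l ((q : ℚ) - (ε : ℚ)) = vv l (q - ε) := by rw [vv, haQ]
  have ha1 : 1 ≤ vv l (q - ε) := vv_one_le hqε0 hdvd
  have hxq : vv l (ε * q - 1) = vv l (q - ε) := by rw [← heq1, vv_unit_mul hε]
  have hook : ∀ k : ℕ, 1 ≤ k → vv l (q - ε) ≤ vv l ((ε * q) ^ k - 1) := by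
    intro k hk
    rw [← hxq]
    exact vv_dvd_le hx10 (xpow_sub_one_ne hε hq hk)
      (by simpa using sub_dvd_pow_sub_pow (ε * q) 1 k)
  -- lam facts
  have hlsm : StrictMono lam := by
    intro a b hab
    have h1 : α a ≤ α b := hmono hab.le
    have h2 : (a : ℕ) < (b : ℕ) := hab
    rw [hlam, hlam]; omega
  have hlam1 : ∀ i, 1 ≤ lam i := fun i => by rw [hlam]; have := hα i; omega
  -- factor conversions
  have hQfac : ∀ k : ℕ, ((q : ℚ) ^ k - (ε : ℚ) ^ k) = ((q ^ k - ε ^ k : ℤ) : ℚ) := by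
    intro k; push_cast; ring
  have hQfac_ne : ∀ k : ℕ, 1 ≤ k → ((q : ℚ) ^ k - (ε : ℚ) ^ k) ≠ 0 := by
    intro k hk
    rw [hQfac]
    exact_mod_cast qpow_sub_unit_ne hq hk (eps_pow hε k)
  have hQval : ∀ k : ℕ, padicValRat l ((q : ℚ) ^ k - (ε : ℚ) ^ k) = vv l ((ε * q) ^ k - 1) := by
    intro k
    rw [hQfac]
    exact vv_q_eps hε k
  have hqepow : ∀ k : ℕ, padicValRat l ((q : ℚ) ^ k) = 0 := by
    intro k
    have hc : ((q : ℚ)) ^ k = ((q ^ k : ℤ) : ℚ) := by push_cast; ring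
    rw [hc]
    exact vv_pow_zero hlq k
  -- cross factors
  have hCfac : ∀ i i' : Fin m,
      ((q : ℚ) ^ (lam i) - (ε : ℚ) ^ (((i : ℕ) + 1) + ((i' : ℕ) + 1)) * (q : ℚ) ^ (lam i'))
        = ((q ^ (lam i) - ε ^ (((i : ℕ) + 1) + ((i' : ℕ) + 1)) * q ^ (lam i') : ℤ) : ℚ) := by
    intro i i'; push_cast; ring
  have hCzid : ∀ i i' : Fin m, i' < i →
      (q ^ (lam i) - ε ^ (((i : ℕ) + 1) + ((i' : ℕ) + 1)) * q ^ (lam i') : ℤ)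
        = q ^ (lam i') * (q ^ (lam i - lam i') - ε ^ (((i : ℕ) + 1) + ((i' : ℕ) + 1))) := by
    intro i i' hlt
    have h1 : lam i' + (lam i - lam i') = lam i := by have := hlsm hlt; omega
    have h2 : (q : ℤ) ^ lam i = q ^ lam i' * q ^ (lam i - lam i') := by rw [← pow_add, h1]
    rw [h2]; ring
  have hCz_ne : ∀ i i' : Fin m, i' < i →
      (q ^ (lam i) - ε ^ (((i : ℕ) + 1) + ((i' : ℕ) + 1)) * q ^ (lam i') : ℤ) ≠ 0 := by
    intro i i' hlt
    rw [hCzid i i' hlt]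
    exact mul_ne_zero (pow_ne_zero _ hq0)
      (qpow_sub_unit_ne hq (by have := hlsm hlt; omega) (eps_pow hε _))
  have hCne : ∀ i : Fin m, ∀ i' ∈ Iio i,
      ((q : ℚ) ^ (lam i) - (ε : ℚ) ^ (((i : ℕ) + 1) + ((i' : ℕ) + 1)) * (q : ℚ) ^ (lam i')) ≠ 0 := by
    intro i i' hi'
    rw [hCfac]
    exact_mod_cast hCz_ne i i' (mem_Iio.mp hi')
  -- the key cross bound
  have hcross : ∀ i : Fin m, ∀ i' ∈ Iio i,
      padicValRat l ((q : ℚ) ^ (lam i) - (ε : ℚ) ^ (((i : ℕ) + 1) + ((i' : ℕ) + 1)) * (q : ℚ) ^ (lam i'))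
        ≤ vv l ((ε * q) ^ (lam i - lam i') - 1) := by
    intro i i' hi'
    have hlt : i' < i := mem_Iio.mp hi'
    have hlamlt : lam i' < lam i := hlsm hlt
    rw [hCfac]
    refine cross_val_le hε hq hlq hdvdx (d := lam i - lam i') (by omega) (by omega) ?_
    by_cases hpar : α i % 2 = α i' % 2
    · left
      rw [Nat.even_iff]
      have e1 := hlam i; have e2 := hlam i'
      have h2 : (i' : ℕ) < (i : ℕ) := hlt
      omega
    · right
      have hne : i ≠ i' := (ne_of_lt hlt).symm
      have hpair : α i + α i' ≤ n := by
        rw [← hsum]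
        calc α i + α i' = ∑ j ∈ ({i, i'} : Finset (Fin m)), α j := (Finset.sum_pair hne).symm
          _ ≤ ∑ j, α j := Finset.sum_le_sum_of_subset (Finset.subset_univ _)
      have h1 := hα i; have h2 := hα i'
      omega
  -- per-row inequality
  have per_i : ∀ i : Fin m, (α i : ℤ) * vv l (q - ε) ≤
      (∑ k ∈ Icc 1 (lam i), padicValRat l ((q : ℚ) ^ k - (ε : ℚ) ^ k)) -
      ∑ i' ∈ Iio i, padicValRat l
        ((q : ℚ) ^ (lam i) - (ε : ℚ) ^ (((i : ℕ) + 1) + ((i' : ℕ) + 1)) * (q : ℚ) ^ (lam i')) := by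
    intro i
    set T : Finset ℕ := (Iio i).image (fun i' => lam i - lam i') with hT
    have hinj : ∀ x ∈ Iio i, ∀ y ∈ Iio i,
        lam i - lam x = lam i - lam y → x = y := by
      intro x hx y hy hxy
      have hx' : lam x < lam i := hlsm (mem_Iio.mp hx)
      have hy' : lam y < lam i := hlsm (mem_Iio.mp hy)
      exact hlsm.injective (by omega)
    have hsubT : T ⊆ Icc 1 (lam i) := by
      intro k hk
      obtain ⟨i', hi', rfl⟩ := mem_image.mp hk
      have h1 := hlsm (mem_Iio.mp hi')
      have h2 := hlam1 i'
      exact mem_Icc.mpr ⟨by omega, by omega⟩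
    have hcardT : T.card = (i : ℕ) := by
      rw [hT, Finset.card_image_of_injOn hinj, Fin.card_Iio]
    have h1 : ∑ i' ∈ Iio i, padicValRat l
          ((q : ℚ) ^ (lam i) - (ε : ℚ) ^ (((i : ℕ) + 1) + ((i' : ℕ) + 1)) * (q : ℚ) ^ (lam i'))
        ≤ ∑ i' ∈ Iio i, vv l ((ε * q) ^ (lam i - lam i') - 1) :=
      Finset.sum_le_sum (fun i' hi' => hcross i i' hi')
    have h2 : ∑ k ∈ T, vv l ((ε * q) ^ k - 1)
        = ∑ i' ∈ Iio i, vv l ((ε * q) ^ (lam i - lam i') - 1) := by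
      rw [hT]; exact Finset.sum_image hinj
    have h3 : ∑ k ∈ Icc 1 (lam i) \ T, vv l ((ε * q) ^ k - 1) + ∑ k ∈ T, vv l ((ε * q) ^ k - 1)
        = ∑ k ∈ Icc 1 (lam i), vv l ((ε * q) ^ k - 1) := Finset.sum_sdiff hsubT
    have h4 : ((Icc 1 (lam i) \ T).card : ℤ) * vv l (q - ε)
        ≤ ∑ k ∈ Icc 1 (lam i) \ T, vv l ((ε * q) ^ k - 1) := by
      have := Finset.card_nsmul_le_sum (Icc 1 (lam i) \ T)
        (fun k => vv l ((ε * q) ^ k - 1)) (vv l (q - ε))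
        (fun k hk => hook k (mem_Icc.mp (Finset.mem_sdiff.mp hk).1).1)
      simpa [nsmul_eq_mul] using this
    have h5 : (Icc 1 (lam i) \ T).card = α i := by
      rw [Finset.card_sdiff_of_subset hsubT, Nat.card_Icc, hcardT, hlam]
      omega
    have h6 : ∑ k ∈ Icc 1 (lam i), padicValRat l ((q : ℚ) ^ k - (ε : ℚ) ^ k)
        = ∑ k ∈ Icc 1 (lam i), vv l ((ε * q) ^ k - 1) :=
      Finset.sum_congr rfl fun k _ => hQval k
    rw [h6]
    rw [h5] at h4
    linarith
  -- value of N
  have hNprod_ne : ∀ k ∈ Icc 2 n, ((q : ℚ) ^ k - (ε : ℚ) ^ k) ≠ 0 :=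
    fun k hk => hQfac_ne k (by have := (mem_Icc.mp hk).1; omega)
  have hNval : padicValRat l N = ∑ k ∈ Icc 2 n, vv l ((ε * q) ^ k - 1) := by
    rw [hN, padicValRat.mul (pow_ne_zero _ hqQ0) (Finset.prod_ne_zero_iff.2 hNprod_ne),
      val_prod' hNprod_ne, hqepow, zero_add]
    exact Finset.sum_congr rfl fun k _ => hQval k
  -- value of D
  have hP1ne : ∀ k ∈ Icc 1 n, ((q : ℚ) ^ k - (ε : ℚ) ^ k) ≠ 0 :=
    fun k hk => hQfac_ne k (mem_Icc.mp hk).1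
  have hP2in_ne : ∀ i : Fin m, (∏ i' ∈ Iio i,
      ((q : ℚ) ^ (lam i) - (ε : ℚ) ^ (((i : ℕ) + 1) + ((i' : ℕ) + 1)) * (q : ℚ) ^ (lam i'))) ≠ 0 :=
    fun i => Finset.prod_ne_zero_iff.2 (hCne i)
  have hP4in_ne : ∀ i : Fin m, (∏ k ∈ Icc 1 (lam i), ((q : ℚ) ^ k - (ε : ℚ) ^ k)) ≠ 0 :=
    fun i => Finset.prod_ne_zero_iff.2 fun k hk => hQfac_ne k (mem_Icc.mp hk).1
  have hDval : padicValRat l D =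
      (∑ k ∈ Icc 1 n, vv l ((ε * q) ^ k - 1)) +
      (∑ i : Fin m, ∑ i' ∈ Iio i, padicValRat l
        ((q : ℚ) ^ (lam i) - (ε : ℚ) ^ (((i : ℕ) + 1) + ((i' : ℕ) + 1)) * (q : ℚ) ^ (lam i'))) -
      (∑ i : Fin m, ∑ k ∈ Icc 1 (lam i), vv l ((ε * q) ^ k - 1)) := by
    rw [hD, padicValRat.div
        (mul_ne_zero (Finset.prod_ne_zero_iff.2 hP1ne) (Finset.prod_ne_zero_iff.2 fun i _ => hP2in_ne i))
        (mul_ne_zero (pow_ne_zero _ hqQ0) (Finset.prod_ne_zero_iff.2 fun i _ => hP4in_ne i)),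
      padicValRat.mul (Finset.prod_ne_zero_iff.2 hP1ne) (Finset.prod_ne_zero_iff.2 fun i _ => hP2in_ne i),
      padicValRat.mul (pow_ne_zero _ hqQ0) (Finset.prod_ne_zero_iff.2 fun i _ => hP4in_ne i),
      val_prod' hP1ne, val_prod' (fun (i : Fin m) _ => hP2in_ne i),
      val_prod' (fun (i : Fin m) _ => hP4in_ne i), hqepow, zero_add,
      Finset.sum_congr rfl (fun k (_ : k ∈ Icc 1 n) => hQval k),
      Finset.sum_congr rfl (fun (i : Fin m) _ => val_prod' (hCne i)),
      Finset.sum_congr rfl (fun (i : Fin m) _ =>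
        (val_prod' (fun k hk => hQfac_ne k (mem_Icc.mp hk).1)).trans
          (Finset.sum_congr rfl (fun k _ => hQval k)))]
  -- sum the per-row inequalities
  have hcast : (∑ i : Fin m, (α i : ℤ)) = (n : ℤ) := by exact_mod_cast hsum
  have hHC : (n : ℤ) * vv l (q - ε) ≤
      (∑ i : Fin m, ∑ k ∈ Icc 1 (lam i), vv l ((ε * q) ^ k - 1)) -
      (∑ i : Fin m, ∑ i' ∈ Iio i, padicValRat l
        ((q : ℚ) ^ (lam i) - (ε : ℚ) ^ (((i : ℕ) + 1) + ((i' : ℕ) + 1)) * (q : ℚ) ^ (lam i'))) := by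
    calc (n : ℤ) * vv l (q - ε) = ∑ i : Fin m, (α i : ℤ) * vv l (q - ε) := by
          rw [← Finset.sum_mul, hcast]
      _ ≤ ∑ i : Fin m, ((∑ k ∈ Icc 1 (lam i), vv l ((ε * q) ^ k - 1)) -
            ∑ i' ∈ Iio i, padicValRat l
              ((q : ℚ) ^ (lam i) - (ε : ℚ) ^ (((i : ℕ) + 1) + ((i' : ℕ) + 1)) * (q : ℚ) ^ (lam i'))) := by
          refine Finset.sum_le_sum fun i _ => ?_
          have := per_i i
          have h6 : ∑ k ∈ Icc 1 (lam i), padicValRat l ((q : ℚ) ^ k - (ε : ℚ) ^ k)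
              = ∑ k ∈ Icc 1 (lam i), vv l ((ε * q) ^ k - 1) :=
            Finset.sum_congr rfl fun k _ => hQval k
          rw [h6] at this
          exact this
      _ = _ := Finset.sum_sub_distrib _ _
  -- split off k = 1
  have hsplit : ∑ k ∈ Icc 1 n, vv l ((ε * q) ^ k - 1)
      = vv l (q - ε) + ∑ k ∈ Icc 2 n, vv l ((ε * q) ^ k - 1) := by
    have hI : Icc 1 n = insert 1 (Icc 2 n) := by
      ext k; simp only [mem_Icc, mem_insert]; omega
    rw [hI, Finset.sum_insert (by simp), pow_one, hxq]
  have hfirst : ((n : ℤ) - 1) * padicValRat l ((q : ℚ) - (ε : ℚ))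
      ≤ padicValRat l N - padicValRat l D := by
    rw [ha_vv, hNval, hDval, hsplit]
    linarith
  have hn2 : (2 : ℤ) ≤ (n : ℤ) := by exact_mod_cast hn
  have hsecond : 0 < ((n : ℤ) - 1) * padicValRat l ((q : ℚ) - (ε : ℚ)) := by
    rw [ha_vv]
    have : (0 : ℤ) < (n : ℤ) - 1 := by omega
    exact mul_pos this (by linarith)
  exact ⟨hfirst, hsecond, by linarith⟩
end

section
/- Let l be an odd prime and q ≥ 2 an integer with l | q − 1. Let n ≥ 1 be an integer with l ≥ n + 1. Let a, b be natural numbers with 4 | a − b, and let 0 ≤ λ₁ < λ₂ < ⋯ < λ_a and 0 ≤ μ₁ < μ₂ < ⋯ < μ_b be integers with λ_i ≤ n and μ_j ≤ n for all i, j, satisfying Σ_i λ_i + Σ_j μ_j − ⌊(a+b−1)²/4⌋ = n. Let c and e be any natural numbers and define the nonzero rational number D = [ ∏_{k=1}^{n−1} (q^{2k} − 1) · (q^n − 1) · ∏_{i < i'} (q^{λ_{i'}} − q^{λ_i}) · ∏_{j < j'} (q^{μ_{j'}} − q^{μ_j}) · ∏_{i,j} (q^{λ_i} + q^{μ_j})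 ] / [ 2^c · q^e · ∏_{i=1}^{a} ∏_{k=1}^{λ_i} (q^{2k} − 1) · ∏_{j=1}^{b} ∏_{k=1}^{μ_j} (q^{2k} − 1) ]. Let N = q^{n(n−1)} · (q^n − 1) · ∏_{k=1}^{n−1} (q^{2k} − 1). Then ν_l(N) − ν_l(D) = (n − ((a−b)/2)²) · ν_l(q − 1). (Here N is the order of Spin⁺₂ₙ(q) and D is the degree of the unipotent character of Spin⁺₂ₙ(q) labelled by the Lusztig symbol with rows (λ₁,…,λ_a) and (μ₁,…,μ_b); in particular this character has l-defect zero if and only if 4n = (a−b)².) -/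
open Finset

section Aux
variable {l : ℕ} [Fact l.Prime] {q : ℤ}

lemma aux_q_zmod (hdvd : (l : ℤ) ∣ q - 1) : ((q : ZMod l)) = 1 := by
  have h := (ZMod.intCast_zmod_eq_zero_iff_dvd (q - 1) l).mpr hdvd
  push_cast at h
  rwa [sub_eq_zero] at h

lemma aux_not_dvd_q (hdvd : (l : ℤ) ∣ q - 1) : ¬ (l : ℤ) ∣ q := by
  intro h
  have h1 : (l : ℤ) ∣ 1 := by
    have := dvd_sub h hdvd
    simpa using this
  have := Int.le_of_dvd one_pos h1
  have hl2 := (Fact.out : l.Prime).two_le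
  omega

lemma aux_val_q_pow (hdvd : (l : ℤ) ∣ q - 1) (hq : 2 ≤ q) (m : ℕ) :
    padicValRat l ((q : ℚ) ^ m) = 0 := by
  have hq0 : (q : ℚ) ≠ 0 := by positivity
  rw [padicValRat.pow (q : ℚ)]
  have : padicValRat l ((q : ℚ)) = 0 := by
    rw [padicValRat.of_int, padicValInt.eq_zero_of_not_dvd (aux_not_dvd_q hdvd)]
    exact Int.natCast_zero
  rw [this, mul_zero]

lemma aux_key (hdvd : (l : ℤ) ∣ q - 1) (hq : 2 ≤ q) {m : ℕ} (hm : 1 ≤ m) (hml : ¬ l ∣ m) :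
    padicValRat l ((q : ℚ) ^ m - 1) = padicValRat l ((q : ℚ) - 1) := by
  set S : ℤ := ∑ i ∈ Finset.range m, q ^ i with hS
  have hSz : ((S : ZMod l)) = (m : ZMod l) := by
    push_cast [hS]
    simp [aux_q_zmod hdvd]
  have hSnd : ¬ (l : ℤ) ∣ S := by
    intro h
    have h0 : ((S : ZMod l)) = 0 := (ZMod.intCast_zmod_eq_zero_iff_dvd S l).mpr h
    rw [hSz] at h0
    exact hml ((ZMod.natCast_eq_zero_iff m l).mp h0)
  have hS0 : S ≠ 0 := fun h => hSnd (h ▸ dvd_zero _)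
  have hfac : (q : ℚ) ^ m - 1 = ((S : ℚ)) * ((q : ℚ) - 1) := by
    rw [hS]
    push_cast
    rw [geom_sum_mul]
  have hq1 : (1 : ℚ) < (q : ℚ) := by exact_mod_cast (by omega : (1:ℤ) < q)
  rw [hfac, padicValRat.mul (by exact_mod_cast hS0) (by linarith),
    padicValRat.of_int, padicValInt.eq_zero_of_not_dvd hSnd]
  simp

lemma aux_plus (hdvd : (l : ℤ) ∣ q - 1) (hodd : Odd l) (α β : ℕ) :
    padicValRat l ((q : ℚ) ^ α + (q : ℚ) ^ β) = 0 := by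
  have hcast : (q : ℚ) ^ α + (q : ℚ) ^ β = (((q ^ α + q ^ β : ℤ) : ℚ)) := by push_cast; ring
  have hnd : ¬ (l : ℤ) ∣ (q ^ α + q ^ β) := by
    intro h
    have h0 : (((q ^ α + q ^ β : ℤ) : ZMod l)) = 0 :=
      (ZMod.intCast_zmod_eq_zero_iff_dvd _ l).mpr h
    push_cast [aux_q_zmod hdvd] at h0
    have h2 : ((2 : ℕ) : ZMod l) = 0 := by push_cast; linear_combination h0
    have hdd := (ZMod.natCast_eq_zero_iff 2 l).mp h2
    have hl2 := (Fact.out : l.Prime).two_le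
    have : l ≤ 2 := Nat.le_of_dvd (by norm_num) hdd
    have : l = 2 := le_antisymm this hl2
    rw [this] at hodd
    exact (by decide : ¬ Odd 2) hodd
  rw [hcast, padicValRat.of_int, padicValInt.eq_zero_of_not_dvd hnd]
  simp
end Aux

lemma aux_minus {l : ℕ} [Fact l.Prime] {q : ℤ} (hdvd : (l : ℤ) ∣ q - 1) (hq : 2 ≤ q)
    {α β : ℕ} (hβα : β < α) (hml : ¬ l ∣ (α - β)) :
    padicValRat l ((q : ℚ) ^ α - (q : ℚ) ^ β) = padicValRat l ((q : ℚ) - 1) := by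
  have hq1 : (1 : ℚ) < (q : ℚ) := by exact_mod_cast (by omega : (1:ℤ) < q)
  have hfac : (q : ℚ) ^ α - (q : ℚ) ^ β = (q : ℚ) ^ β * ((q : ℚ) ^ (α - β) - 1) := by
    rw [mul_sub, mul_one, ← pow_add]
    congr 2
    omega
  have h1 : (1 : ℚ) < (q : ℚ) ^ (α - β) := one_lt_pow₀ hq1 (by omega)
  rw [hfac, padicValRat.mul (by positivity) (by linarith),
    aux_val_q_pow hdvd hq, aux_key hdvd hq (by omega) hml, zero_add]

lemma sum_range_gauss (m : ℕ) : (∑ i ∈ Finset.range m, (i : ℤ)) * 2 + m = m * m := by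
  induction m with
  | zero => simp
  | succ k ih =>
    rw [Finset.sum_range_succ]
    push_cast
    push_cast at ih
    ring_nf
    ring_nf at ih
    linarith

lemma padicValRat_prod (p : ℕ) [Fact p.Prime] {ι : Type*} (s : Finset ι) (f : ι → ℚ)
    (hf : ∀ i ∈ s, f i ≠ 0) :
    padicValRat p (∏ i ∈ s, f i) = ∑ i ∈ s, padicValRat p (f i) := by
  classical
  induction s using Finset.induction with
  | empty => simp
  | @insert j s hj ih =>
    rw [Finset.prod_insert hj, Finset.sum_insert hj,
      padicValRat.mul (hf j (Finset.mem_insert_self j s))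
        (Finset.prod_ne_zero_iff.mpr fun i hi => hf i (Finset.mem_insert_of_mem hi)),
      ih fun i hi => hf i (Finset.mem_insert_of_mem hi)]



/-- **Defect computation for unipotent characters of `Spin⁺₂ₙ(q)`** (`l | q − 1`, `l ≥ n+1`).
Here `N = q^{n(n−1)} (q^n − 1) ∏_{k=1}^{n−1} (q^{2k} − 1)` is the group order, `D` is the
degree of the unipotent character labelled by the Lusztig symbol with strictly increasing rows
`λ₁ < ⋯ < λ_a` and `μ₁ < ⋯ < μ_b` (with `4 ∣ a − b` and
`Σλ + Σμ − ⌊(a+b−1)²/4⌋ = n`), and `ν_l` is the `l`-adic valuation. Then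
`ν_l(N) − ν_l(D) = (n − ((a−b)/2)²) · ν_l(q−1)`. -/
theorem Spin_unipotent_character_defect_valuation
    (l : ℕ) (hl : l.Prime) (hodd : Odd l)
    (q : ℤ) (hq : 2 ≤ q) (hdvd : (l : ℤ) ∣ q - 1)
    (n : ℕ) (hn : 1 ≤ n) (hln : n + 1 ≤ l)
    (a b : ℕ) (hab : (4 : ℤ) ∣ (a : ℤ) - (b : ℤ))
    (lam : Fin a → ℕ) (mu : Fin b → ℕ)
    (hlam : StrictMono lam) (hmu : StrictMono mu)
    (hlamn : ∀ i, lam i ≤ n) (hmun : ∀ j, mu j ≤ n)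
    (hsum : (∑ i, (lam i : ℤ)) + (∑ j, (mu j : ℤ)) -
        ⌊(((((a : ℤ) + b - 1) ^ 2 : ℤ) : ℚ) / 4)⌋ = (n : ℤ))
    (c e : ℕ) (D N : ℚ)
    (hD : D = ((∏ k ∈ Icc 1 (n - 1), ((q : ℚ) ^ (2 * k) - 1)) * ((q : ℚ) ^ n - 1) *
        (∏ i' : Fin a, ∏ i ∈ Iio i', ((q : ℚ) ^ (lam i') - (q : ℚ) ^ (lam i))) *
        (∏ j' : Fin b, ∏ j ∈ Iio j', ((q : ℚ) ^ (mu j') - (q : ℚ) ^ (mu j))) *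
        ∏ i : Fin a, ∏ j : Fin b, ((q : ℚ) ^ (lam i) + (q : ℚ) ^ (mu j))) /
      ((2 : ℚ) ^ c * (q : ℚ) ^ e *
        (∏ i : Fin a, ∏ k ∈ Icc 1 (lam i), ((q : ℚ) ^ (2 * k) - 1)) *
        ∏ j : Fin b, ∏ k ∈ Icc 1 (mu j), ((q : ℚ) ^ (2 * k) - 1)))
    (hN : N = (q : ℚ) ^ (n * (n - 1)) * ((q : ℚ) ^ n - 1) *
        ∏ k ∈ Icc 1 (n - 1), ((q : ℚ) ^ (2 * k) - 1)) :
    padicValRat l N - padicValRat l D =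
      ((n : ℤ) - (((a : ℤ) - (b : ℤ)) / 2) ^ 2) * padicValRat l ((q : ℚ) - 1) := by
  haveI : Fact l.Prime := ⟨hl⟩
  set v := padicValRat l ((q : ℚ) - 1) with hv
  have hq1 : (1 : ℚ) < (q : ℚ) := by exact_mod_cast (by omega : (1:ℤ) < q)
  have hq0 : (q : ℚ) ≠ 0 := by positivity
  have hpow1 : ∀ m : ℕ, 1 ≤ m → (1:ℚ) < (q:ℚ) ^ m := fun m hm => one_lt_pow₀ hq1 (by omega)
  have hne : ∀ m : ℕ, 1 ≤ m → (q:ℚ) ^ m - 1 ≠ 0 := fun m hm => ne_of_gt (by linarith [hpow1 m hm])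
  have hndvd : ∀ m : ℕ, 1 ≤ m → m ≤ n → ¬ l ∣ m := by
    intro m h1 h2 hd
    have := Nat.le_of_dvd (by omega) hd
    omega
  have hndvd2 : ∀ m : ℕ, 1 ≤ m → m ≤ n → ¬ l ∣ 2 * m := by
    intro m h1 h2 hd
    rcases (Nat.Prime.dvd_mul hl).mp hd with h | h
    · have h2l := Nat.le_of_dvd (by norm_num) h
      have hl2 := hl.two_le
      have ho := Nat.odd_iff.mp hodd
      omega
    · exact hndvd m h1 h2 h
  have hval2k : ∀ k : ℕ, 1 ≤ k → k ≤ n → padicValRat l ((q:ℚ) ^ (2*k) - 1) = v :=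
    fun k h1 h2 => aux_key hdvd hq (by omega) (hndvd2 k h1 h2)
  have hvalminus : ∀ α β : ℕ, β < α → α ≤ n →
      padicValRat l ((q:ℚ) ^ α - (q:ℚ) ^ β) = v := by
    intro α β h1 h2
    exact aux_minus hdvd hq h1 (hndvd (α - β) (by omega) (by omega))
  -- nonzeroness of pieces
  have hP1ne : (∏ k ∈ Icc 1 (n-1), ((q:ℚ)^(2*k) - 1)) ≠ 0 :=
    Finset.prod_ne_zero_iff.mpr fun k hk => hne (2*k) (by simp only [mem_Icc] at hk; omega)
  have hPAne : (∏ i' : Fin a, ∏ i ∈ Iio i', ((q:ℚ)^(lam i') - (q:ℚ)^(lam i))) ≠ 0 := by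
    refine Finset.prod_ne_zero_iff.mpr fun i' _ => Finset.prod_ne_zero_iff.mpr fun i hi => ?_
    have : i < i' := by simpa [Finset.mem_Iio] using hi
    have := hlam this
    have := pow_lt_pow_right₀ hq1 this
    linarith
  have hPBne : (∏ j' : Fin b, ∏ j ∈ Iio j', ((q:ℚ)^(mu j') - (q:ℚ)^(mu j))) ≠ 0 := by
    refine Finset.prod_ne_zero_iff.mpr fun j' _ => Finset.prod_ne_zero_iff.mpr fun j hj => ?_
    have : j < j' := by simpa [Finset.mem_Iio] using hj
    have := hmu this
    have := pow_lt_pow_right₀ hq1 this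
    linarith
  have hPPne : (∏ i : Fin a, ∏ j : Fin b, ((q:ℚ)^(lam i) + (q:ℚ)^(mu j))) ≠ 0 :=
    Finset.prod_ne_zero_iff.mpr fun i _ => Finset.prod_ne_zero_iff.mpr fun j _ => by positivity
  have hDAne : (∏ i : Fin a, ∏ k ∈ Icc 1 (lam i), ((q:ℚ)^(2*k) - 1)) ≠ 0 :=
    Finset.prod_ne_zero_iff.mpr fun i _ => Finset.prod_ne_zero_iff.mpr fun k hk =>
      hne (2*k) (by simp only [mem_Icc] at hk; omega)
  have hDBne : (∏ j : Fin b, ∏ k ∈ Icc 1 (mu j), ((q:ℚ)^(2*k) - 1)) ≠ 0 :=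
    Finset.prod_ne_zero_iff.mpr fun j _ => Finset.prod_ne_zero_iff.mpr fun k hk =>
      hne (2*k) (by simp only [mem_Icc] at hk; omega)
  -- valuations of pieces
  have hP1v : padicValRat l (∏ k ∈ Icc 1 (n-1), ((q:ℚ)^(2*k) - 1)) = ((n:ℤ) - 1) * v := by
    rw [padicValRat_prod l _ _ (fun k hk => hne (2*k) (by simp only [mem_Icc] at hk; omega)),
      Finset.sum_congr rfl (fun k hk => by
        simp only [mem_Icc] at hk
        exact hval2k k hk.1 (by omega)),
      Finset.sum_const, Nat.card_Icc, nsmul_eq_mul]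
    congr 1
    omega
  have hPAv : padicValRat l (∏ i' : Fin a, ∏ i ∈ Iio i', ((q:ℚ)^(lam i') - (q:ℚ)^(lam i))) =
      (∑ i : Fin a, ((i : ℕ) : ℤ)) * v := by
    have hinne : ∀ (i' : Fin a), ∀ i ∈ Iio i', (q:ℚ)^(lam i') - (q:ℚ)^(lam i) ≠ 0 := by
      intro i' i hi
      have hlt : i < i' := by simpa [Finset.mem_Iio] using hi
      have := pow_lt_pow_right₀ hq1 (hlam hlt)
      linarith
    have hinner : ∀ i' : Fin a,
        padicValRat l (∏ i ∈ Iio i', ((q:ℚ)^(lam i') - (q:ℚ)^(lam i))) = ((i' : ℕ) : ℤ) * v := by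
      intro i'
      rw [padicValRat_prod l _ _ (hinne i')]
      calc ∑ i ∈ Iio i', padicValRat l ((q:ℚ)^(lam i') - (q:ℚ)^(lam i))
          = ∑ _i ∈ Iio i', v := Finset.sum_congr rfl (fun i hi => by
            have hlt : i < i' := by simpa [Finset.mem_Iio] using hi
            exact hvalminus (lam i') (lam i) (hlam hlt) (hlamn i'))
        _ = ((i' : ℕ) : ℤ) * v := by rw [Finset.sum_const, Fin.card_Iio, nsmul_eq_mul]
    rw [padicValRat_prod l _ _ (fun i' _ => Finset.prod_ne_zero_iff.mpr (hinne i'))]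
    calc ∑ i' : Fin a, padicValRat l (∏ i ∈ Iio i', ((q:ℚ)^(lam i') - (q:ℚ)^(lam i)))
        = ∑ i' : Fin a, ((i' : ℕ) : ℤ) * v := Finset.sum_congr rfl (fun i' _ => hinner i')
      _ = (∑ i : Fin a, ((i : ℕ) : ℤ)) * v := by rw [Finset.sum_mul]
  have hPBv : padicValRat l (∏ j' : Fin b, ∏ j ∈ Iio j', ((q:ℚ)^(mu j') - (q:ℚ)^(mu j))) =
      (∑ j : Fin b, ((j : ℕ) : ℤ)) * v := by
    have hinne : ∀ (j' : Fin b), ∀ j ∈ Iio j', (q:ℚ)^(mu j') - (q:ℚ)^(mu j) ≠ 0 := by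
      intro j' j hj
      have hlt : j < j' := by simpa [Finset.mem_Iio] using hj
      have := pow_lt_pow_right₀ hq1 (hmu hlt)
      linarith
    have hinner : ∀ j' : Fin b,
        padicValRat l (∏ j ∈ Iio j', ((q:ℚ)^(mu j') - (q:ℚ)^(mu j))) = ((j' : ℕ) : ℤ) * v := by
      intro j'
      rw [padicValRat_prod l _ _ (hinne j')]
      calc ∑ j ∈ Iio j', padicValRat l ((q:ℚ)^(mu j') - (q:ℚ)^(mu j))
          = ∑ _j ∈ Iio j', v := Finset.sum_congr rfl (fun j hj => by
            have hlt : j < j' := by simpa [Finset.mem_Iio] using hj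
            exact hvalminus (mu j') (mu j) (hmu hlt) (hmun j'))
        _ = ((j' : ℕ) : ℤ) * v := by rw [Finset.sum_const, Fin.card_Iio, nsmul_eq_mul]
    rw [padicValRat_prod l _ _ (fun j' _ => Finset.prod_ne_zero_iff.mpr (hinne j'))]
    calc ∑ j' : Fin b, padicValRat l (∏ j ∈ Iio j', ((q:ℚ)^(mu j') - (q:ℚ)^(mu j)))
        = ∑ j' : Fin b, ((j' : ℕ) : ℤ) * v := Finset.sum_congr rfl (fun j' _ => hinner j')
      _ = (∑ j : Fin b, ((j : ℕ) : ℤ)) * v := by rw [Finset.sum_mul]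
  have hPPv : padicValRat l (∏ i : Fin a, ∏ j : Fin b, ((q:ℚ)^(lam i) + (q:ℚ)^(mu j))) = 0 := by
    have hinner : ∀ i : Fin a,
        padicValRat l (∏ j : Fin b, ((q:ℚ)^(lam i) + (q:ℚ)^(mu j))) = 0 := by
      intro i
      rw [padicValRat_prod l _ _ (fun j _ => by positivity)]
      calc ∑ j : Fin b, padicValRat l ((q:ℚ)^(lam i) + (q:ℚ)^(mu j))
          = ∑ _j : Fin b, (0:ℤ) := Finset.sum_congr rfl (fun j _ => aux_plus hdvd hodd (lam i) (mu j))
        _ = 0 := by simp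
    rw [padicValRat_prod l _ _ (fun i _ => Finset.prod_ne_zero_iff.mpr fun j _ => by positivity)]
    calc ∑ i : Fin a, padicValRat l (∏ j : Fin b, ((q:ℚ)^(lam i) + (q:ℚ)^(mu j)))
        = ∑ _i : Fin a, (0:ℤ) := Finset.sum_congr rfl (fun i _ => hinner i)
      _ = 0 := by simp
  have hDAv : padicValRat l (∏ i : Fin a, ∏ k ∈ Icc 1 (lam i), ((q:ℚ)^(2*k) - 1)) =
      (∑ i, (lam i : ℤ)) * v := by
    have hinner : ∀ i : Fin a,
        padicValRat l (∏ k ∈ Icc 1 (lam i), ((q:ℚ)^(2*k) - 1)) = ((lam i : ℕ) : ℤ) * v := by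
      intro i
      rw [padicValRat_prod l _ _ (fun k hk => hne (2*k) (by simp only [mem_Icc] at hk; omega))]
      calc ∑ k ∈ Icc 1 (lam i), padicValRat l ((q:ℚ)^(2*k) - 1)
          = ∑ _k ∈ Icc 1 (lam i), v := Finset.sum_congr rfl (fun k hk => by
            simp only [mem_Icc] at hk
            exact hval2k k hk.1 (le_trans hk.2 (hlamn i)))
        _ = ((lam i : ℕ) : ℤ) * v := by
            rw [Finset.sum_const, Nat.card_Icc, nsmul_eq_mul]
            norm_num
    rw [padicValRat_prod l _ _ (fun i _ => Finset.prod_ne_zero_iff.mpr fun k hk =>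
      hne (2*k) (by simp only [mem_Icc] at hk; omega))]
    calc ∑ i : Fin a, padicValRat l (∏ k ∈ Icc 1 (lam i), ((q:ℚ)^(2*k) - 1))
        = ∑ i : Fin a, ((lam i : ℕ) : ℤ) * v := Finset.sum_congr rfl (fun i _ => hinner i)
      _ = (∑ i, (lam i : ℤ)) * v := by rw [Finset.sum_mul]
  have hDBv : padicValRat l (∏ j : Fin b, ∏ k ∈ Icc 1 (mu j), ((q:ℚ)^(2*k) - 1)) =
      (∑ j, (mu j : ℤ)) * v := by
    have hinner : ∀ j : Fin b,
        padicValRat l (∏ k ∈ Icc 1 (mu j), ((q:ℚ)^(2*k) - 1)) = ((mu j : ℕ) : ℤ) * v := by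
      intro j
      rw [padicValRat_prod l _ _ (fun k hk => hne (2*k) (by simp only [mem_Icc] at hk; omega))]
      calc ∑ k ∈ Icc 1 (mu j), padicValRat l ((q:ℚ)^(2*k) - 1)
          = ∑ _k ∈ Icc 1 (mu j), v := Finset.sum_congr rfl (fun k hk => by
            simp only [mem_Icc] at hk
            exact hval2k k hk.1 (le_trans hk.2 (hmun j)))
        _ = ((mu j : ℕ) : ℤ) * v := by
            rw [Finset.sum_const, Nat.card_Icc, nsmul_eq_mul]
            norm_num
    rw [padicValRat_prod l _ _ (fun j _ => Finset.prod_ne_zero_iff.mpr fun k hk =>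
      hne (2*k) (by simp only [mem_Icc] at hk; omega))]
    calc ∑ j : Fin b, padicValRat l (∏ k ∈ Icc 1 (mu j), ((q:ℚ)^(2*k) - 1))
        = ∑ j : Fin b, ((mu j : ℕ) : ℤ) * v := Finset.sum_congr rfl (fun j _ => hinner j)
      _ = (∑ j, (mu j : ℤ)) * v := by rw [Finset.sum_mul]
  -- valuation of N
  have hNv : padicValRat l N = (n : ℤ) * v := by
    rw [hN, padicValRat.mul (mul_ne_zero (pow_ne_zero _ hq0) (hne n hn)) hP1ne,
      padicValRat.mul (pow_ne_zero _ hq0) (hne n hn),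
      aux_val_q_pow hdvd hq, aux_key hdvd hq hn (hndvd n hn le_rfl), hP1v]
    push_cast
    ring
  -- valuation of D
  have hXne : (q:ℚ) ^ n - 1 ≠ 0 := hne n hn
  have h2c : (2:ℚ) ^ c ≠ 0 := by positivity
  have hqe : (q:ℚ) ^ e ≠ 0 := pow_ne_zero _ hq0
  have hnum_ne := mul_ne_zero (mul_ne_zero (mul_ne_zero (mul_ne_zero hP1ne hXne) hPAne) hPBne) hPPne
  have hden_ne := mul_ne_zero (mul_ne_zero (mul_ne_zero h2c hqe) hDAne) hDBne
  have h2v : padicValRat l ((2:ℚ) ^ c) = 0 := by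
    have hnd : ¬ l ∣ 2 ^ c := by
      intro h
      have h2 : l ∣ 2 := hl.dvd_of_dvd_pow h
      have := Nat.le_of_dvd (by norm_num) h2
      have := hl.two_le
      have ho := Nat.odd_iff.mp hodd
      omega
    have hcast : ((2:ℚ) ^ c) = (((2^c : ℕ) : ℚ)) := by push_cast; ring
    rw [hcast, padicValRat.of_nat, padicValNat.eq_zero_of_not_dvd hnd]
    exact Int.natCast_zero
  have hDv : padicValRat l D =
      (((n:ℤ) - 1) * v + v + (∑ i : Fin a, ((i : ℕ) : ℤ)) * v + (∑ j : Fin b, ((j : ℕ) : ℤ)) * v)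
        - ((∑ i, (lam i : ℤ)) * v + (∑ j, (mu j : ℤ)) * v) := by
    rw [hD, padicValRat.div hnum_ne hden_ne,
      padicValRat.mul (mul_ne_zero (mul_ne_zero (mul_ne_zero hP1ne hXne) hPAne) hPBne) hPPne,
      padicValRat.mul (mul_ne_zero (mul_ne_zero hP1ne hXne) hPAne) hPBne,
      padicValRat.mul (mul_ne_zero hP1ne hXne) hPAne,
      padicValRat.mul hP1ne hXne,
      padicValRat.mul (mul_ne_zero (mul_ne_zero h2c hqe) hDAne) hDBne,
      padicValRat.mul (mul_ne_zero h2c hqe) hDAne,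
      padicValRat.mul h2c hqe,
      hP1v, aux_key hdvd hq hn (hndvd n hn le_rfl), hPAv, hPBv, hPPv, h2v,
      aux_val_q_pow hdvd hq, hDAv, hDBv]
    ring
  -- arithmetic
  obtain ⟨t, ht⟩ := hab
  have hfloor : ⌊(((((a : ℤ) + b - 1) ^ 2 : ℤ) : ℚ) / 4)⌋ = ((a:ℤ) + b - 1) ^ 2 / 4 := by
    rw [show (4:ℚ) = (((4:ℕ) : ℕ) : ℚ) from by norm_num,
      Rat.floor_intCast_div_natCast (((a:ℤ) + b - 1) ^ 2) 4]
    norm_num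
  have hd1 : ((a:ℤ) + b - 1) ^ 2 / 4 = ((b:ℤ) + 2*t) ^ 2 - ((b:ℤ) + 2*t) := by
    have h : ((a:ℤ) + b - 1) ^ 2 = 4 * (((b:ℤ) + 2*t) ^ 2 - ((b:ℤ) + 2*t)) + 1 := by
      have hA : (a:ℤ) = (b:ℤ) + 4*t := by linarith
      rw [hA]; ring
    have hgen : ∀ X : ℤ, (4*X+1)/4 = X := fun X => by omega
    rw [h, hgen]
  have hd2 : ((a:ℤ) - (b:ℤ)) / 2 = 2 * t := by
    rw [ht]
    omega
  have hSa2 : 2 * (∑ i : Fin a, ((i : ℕ) : ℤ)) = (a:ℤ) * ((a:ℤ) - 1) := by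
    have h1 : (∑ i : Fin a, ((i : ℕ) : ℤ)) = ∑ i ∈ Finset.range a, (i : ℤ) :=
      Fin.sum_univ_eq_sum_range (fun i => (i : ℤ)) a
    have h2 := sum_range_gauss a
    rw [h1]
    linear_combination h2
  have hSb2 : 2 * (∑ j : Fin b, ((j : ℕ) : ℤ)) = (b:ℤ) * ((b:ℤ) - 1) := by
    have h1 : (∑ j : Fin b, ((j : ℕ) : ℤ)) = ∑ j ∈ Finset.range b, (j : ℤ) :=
      Fin.sum_univ_eq_sum_range (fun j => (j : ℤ)) b
    have h2 := sum_range_gauss b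
    rw [h1]
    linear_combination h2
  rw [hfloor, hd1] at hsum
  have hcoeff : (∑ i, (lam i : ℤ)) + (∑ j, (mu j : ℤ))
      - (∑ i : Fin a, ((i : ℕ) : ℤ)) - (∑ j : Fin b, ((j : ℕ) : ℤ))
      = (n:ℤ) - (2*t)^2 := by
    have h2 : 2 * ((∑ i, (lam i : ℤ)) + (∑ j, (mu j : ℤ))
        - (∑ i : Fin a, ((i : ℕ) : ℤ)) - (∑ j : Fin b, ((j : ℕ) : ℤ)))
        = 2 * ((n:ℤ) - (2*t)^2) := by
      linear_combination 2 * hsum - hSa2 - hSb2 + (1 - (a:ℤ) - (b:ℤ) - 4*t) * ht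
    linarith
  rw [hNv, hDv, hd2]
  linear_combination v * hcoeff
end

section
/- Let n ≥ 1 be an integer and let a, b be natural numbers with 4 | a − b. Let 0 ≤ λ₁ < λ₂ < ⋯ < λ_a and 0 ≤ μ₁ < μ₂ < ⋯ < μ_b be integers such that, if a ≥ 1 and b ≥ 1, then λ₁ and μ₁ are not both zero, and such that Σ_i λ_i + Σ_j μ_j = n + ⌊(a+b−1)²/4⌋. If (a − b)² = 4n, then either b = 0 or a = 0; moreover, if b = 0 then λ_i = i − 1 for all 1 ≤ i ≤ a, a² = 4n, and n = (a/2)² with a/2 even (symmetrically, if a = 0 then μ_j = j − 1 for all j, b² = 4n, and n = (b/2)² with b/2 even). In particular, n is the square of an even integer. -/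
open Finset

private lemma fin_val_le_strictMono {a : ℕ} {f : Fin a → ℕ} (hf : StrictMono f) :
    ∀ k (hk : k < a), k ≤ f ⟨k, hk⟩ := by
  intro k
  induction k with
  | zero => intro hk; exact Nat.zero_le _
  | succ m ih =>
    intro hk
    have hm : m < a := Nat.lt_of_succ_lt hk
    have h1 := ih hm
    have h2 : f ⟨m, hm⟩ < f ⟨m + 1, hk⟩ := hf (by simp [Fin.lt_def])
    omega

private lemma fin_val_le_strictMono' {a : ℕ} {f : Fin a → ℕ} (hf : StrictMono f) (ha : 0 < a) :
    ∀ k (hk : k < a), f ⟨0, ha⟩ + k ≤ f ⟨k, hk⟩ := by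
  intro k
  induction k with
  | zero => intro hk; simp
  | succ m ih =>
    intro hk
    have hm : m < a := Nat.lt_of_succ_lt hk
    have h1 := ih hm
    have h2 : f ⟨m, hm⟩ < f ⟨m + 1, hk⟩ := hf (by simp [Fin.lt_def])
    omega

private lemma gauss_fin (a : ℕ) : 2 * ∑ i : Fin a, ((i : ℕ) : ℤ) = (a : ℤ) ^ 2 - a := by
  induction a with
  | zero => simp
  | succ m ih =>
    rw [Fin.sum_univ_castSucc]
    simp only [Fin.coe_castSucc, Fin.val_last]
    push_cast
    push_cast at ih
    ring_nf
    ring_nf at ih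
    linarith

private lemma floor4 (m : ℤ) : ⌊((m : ℚ)) / 4⌋ = m / 4 := by
  have := Rat.floor_intCast_div_natCast m 4
  norm_num at this ⊢
  exact this

/-- A strictly increasing row `lam : Fin a → ℕ` with sum equal to `a(a-1)/2`
must be the identity row. -/
private lemma row_eq_id {a : ℕ} {f : Fin a → ℕ} (hf : StrictMono f)
    (h : 2 * ∑ i : Fin a, ((f i : ℤ)) = (a : ℤ) ^ 2 - a) :
    ∀ i : Fin a, f i = (i : ℕ) := by
  have hle : ∀ i : Fin a, ((i : ℕ) : ℤ) ≤ (f i : ℤ) := by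
    intro i
    exact_mod_cast fin_val_le_strictMono hf i.1 i.2
  have hsum : ∑ i : Fin a, ((i : ℕ) : ℤ) = ∑ i : Fin a, (f i : ℤ) := by
    have := gauss_fin a
    linarith
  have := (Finset.sum_eq_sum_iff_of_le (fun i _ => hle i)).mp hsum
  intro i
  have := this i (Finset.mem_univ i)
  exact_mod_cast this.symm

/-- **Uniqueness of defect-zero Lusztig symbols for `Spin⁺₂ₙ(q)`.**
Let `n ≥ 1`, `a, b ∈ ℕ` with `4 ∣ a − b`, and let `λ₁ < ⋯ < λ_a`, `μ₁ < ⋯ < μ_b` be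
strictly increasing rows of natural numbers such that `λ₁` and `μ₁` are not both zero
(when both rows are nonempty) and `Σλ + Σμ = n + ⌊(a+b−1)²/4⌋`. If `(a − b)² = 4n`, then
one of the rows is empty; the nonempty row is `(0, 1, …, a−1)`, its length satisfies
`a² = 4n`, and `n = (a/2)²` with `a/2` even. In particular `n` is the square of an even
integer. -/
theorem Lusztig_symbol_defect_zero_classification
    (n : ℕ) (hn : 1 ≤ n) (a b : ℕ) (hab : (4 : ℤ) ∣ (a : ℤ) - (b : ℤ))
    (lam : Fin a → ℕ) (mu : Fin b → ℕ)
    (hlam : StrictMono lam) (hmu : StrictMono mu)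
    (hfirst : ∀ (ha : 0 < a) (hb : 0 < b), ¬(lam ⟨0, ha⟩ = 0 ∧ mu ⟨0, hb⟩ = 0))
    (hsum : (∑ i, (lam i : ℤ)) + (∑ j, (mu j : ℤ)) =
        (n : ℤ) + ⌊(((((a : ℤ) + b - 1) ^ 2 : ℤ) : ℚ) / 4)⌋)
    (hdef : ((a : ℤ) - (b : ℤ)) ^ 2 = 4 * n) :
    (b = 0 ∨ a = 0) ∧
    (b = 0 → (∀ i : Fin a, lam i = (i : ℕ)) ∧ a ^ 2 = 4 * n ∧ n = (a / 2) ^ 2 ∧ 2 ∣ a / 2) ∧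
    (a = 0 → (∀ j : Fin b, mu j = (j : ℕ)) ∧ b ^ 2 = 4 * n ∧ n = (b / 2) ^ 2 ∧ 2 ∣ b / 2) ∧
    ∃ k : ℕ, n = (2 * k) ^ 2 := by
  obtain ⟨t, ht⟩ := hab
  rw [floor4] at hsum
  -- n = 4 t^2
  have hsq : (4 * t) ^ 2 = 4 * (n : ℤ) := by rw [← ht]; exact hdef
  have hnt : (n : ℤ) = 4 * t ^ 2 := by nlinarith [hsq]
  -- the half-sum u = (a+b)/2
  set u : ℤ := (b : ℤ) + 2 * t with hu
  have hA : (a : ℤ) = u + 2 * t := by rw [hu]; linarith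
  have hB : (b : ℤ) = u - 2 * t := by rw [hu]; ring
  -- lower bounds for row sums
  have hLlb : (a : ℤ) ^ 2 - a ≤ 2 * ∑ i, (lam i : ℤ) := by
    rw [← gauss_fin a]
    have : ∑ i : Fin a, ((i : ℕ) : ℤ) ≤ ∑ i, (lam i : ℤ) :=
      Finset.sum_le_sum fun i _ => by exact_mod_cast fin_val_le_strictMono hlam i.1 i.2
    linarith
  have hMlb : (b : ℤ) ^ 2 - b ≤ 2 * ∑ j, (mu j : ℤ) := by
    rw [← gauss_fin b]
    have : ∑ j : Fin b, ((j : ℕ) : ℤ) ≤ ∑ j, (mu j : ℤ) :=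
      Finset.sum_le_sum fun j _ => by exact_mod_cast fin_val_le_strictMono hmu j.1 j.2
    linarith
  -- not both rows nonempty
  have hkey : a = 0 ∨ b = 0 := by
    by_contra hc
    push_neg at hc
    obtain ⟨ha, hb⟩ := hc
    have ha' : 0 < a := Nat.pos_of_ne_zero ha
    have hb' : 0 < b := Nat.pos_of_ne_zero hb
    -- floor value
    have hab1 : ((a : ℤ) + b - 1) ^ 2 = 4 * (u ^ 2 - u) + 1 := by
      rw [hA, hB]; ring
    have hfl : ((a : ℤ) + b - 1) ^ 2 / 4 = u ^ 2 - u := by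
      rw [hab1]
      omega
    rw [hfl] at hsum
    -- strengthened bound from first entries
    have hone := hfirst ha' hb'
    have h01 : 1 ≤ lam ⟨0, ha'⟩ ∨ 1 ≤ mu ⟨0, hb'⟩ := by omega
    have hid : ((a : ℤ) + b - 1) ^ 2 = 4 * (u ^ 2 - u) + 1 := hab1
    have hAB2 : (a : ℤ) ^ 2 + (b : ℤ) ^ 2 - a - b = 2 * u ^ 2 + 8 * t ^ 2 - 2 * u := by
      rw [hA, hB]; ring
    rcases h01 with h1 | h1
    · have hL2 : (a : ℤ) ^ 2 - a + 2 * a ≤ 2 * ∑ i, (lam i : ℤ) := by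
        rw [← gauss_fin a]
        have hp : ∀ i : Fin a, ((i : ℕ) : ℤ) + 1 ≤ (lam i : ℤ) := by
          intro i
          have h2 : lam ⟨0, ha'⟩ + (i : ℕ) ≤ lam i := by
            have := fin_val_le_strictMono' hlam ha' i.1 i.2
            simpa using this
          have : (i : ℕ) + 1 ≤ lam i := by omega
          exact_mod_cast this
        have : ∑ i : Fin a, (((i : ℕ) : ℤ) + 1) ≤ ∑ i, (lam i : ℤ) :=
          Finset.sum_le_sum fun i _ => hp i
        rw [Finset.sum_add_distrib] at this
        simp at this
        linarith
      have hApos : (1 : ℤ) ≤ a := by exact_mod_cast ha'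
      linarith [hnt]
    · have hM2 : (b : ℤ) ^ 2 - b + 2 * b ≤ 2 * ∑ j, (mu j : ℤ) := by
        rw [← gauss_fin b]
        have hp : ∀ j : Fin b, ((j : ℕ) : ℤ) + 1 ≤ (mu j : ℤ) := by
          intro j
          have h2 : mu ⟨0, hb'⟩ + (j : ℕ) ≤ mu j := by
            have := fin_val_le_strictMono' hmu hb' j.1 j.2
            simpa using this
          have : (j : ℕ) + 1 ≤ mu j := by omega
          exact_mod_cast this
        have : ∑ j : Fin b, (((j : ℕ) : ℤ) + 1) ≤ ∑ j, (mu j : ℤ) :=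
          Finset.sum_le_sum fun j _ => hp j
        rw [Finset.sum_add_distrib] at this
        simp at this
        linarith
      have hBpos : (1 : ℤ) ≤ b := by exact_mod_cast hb'
      linarith [hnt]
  -- now handle the two cases
  rcases hkey with ha0 | hb0
  · -- a = 0 : the mu row is the identity
    subst ha0
    have hb' : b ≠ 0 := by
      rintro rfl
      simp at hdef
      omega
    have htneg : (b : ℤ) = 4 * (-t) := by push_cast at ht ⊢; linarith
    set k : ℕ := (-t).toNat with hk
    have htk : (-t) = (k : ℤ) := by
      have hbpos : (0 : ℤ) ≤ (b : ℤ) := by positivity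
      rw [hk]; omega
    have hbk : b = 4 * k := by
      have : (b : ℤ) = ((4 * k : ℕ) : ℤ) := by push_cast; rw [htneg, htk]
      exact_mod_cast this
    have hnk : n = 4 * k ^ 2 := by
      have : (n : ℤ) = ((4 * k ^ 2 : ℕ) : ℤ) := by
        push_cast
        rw [hnt]
        have : (t : ℤ) ^ 2 = (-t) ^ 2 := by ring
        rw [this, htk]
      exact_mod_cast this
    -- sum of lam is empty
    have hlam0 : (∑ i : Fin 0, (lam i : ℤ)) = 0 := by simp
    have hfl : ((0 : ℕ) + (b : ℤ) - 1) ^ 2 / 4 = 4 * (k : ℤ) ^ 2 - 2 * k := by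
      have hid : ((0 : ℕ) + (b : ℤ) - 1) ^ 2 = 4 * (4 * (k : ℤ) ^ 2 - 2 * k) + 1 := by
        have : (b : ℤ) = 4 * k := by exact_mod_cast hbk
        rw [this]; push_cast; ring
      rw [hid]
      generalize (4 * (k : ℤ) ^ 2 - 2 * k) = x
      omega
    rw [hfl] at hsum
    have hmusum : 2 * ∑ j, (mu j : ℤ) = (b : ℤ) ^ 2 - b := by
      have hnk' : (n : ℤ) = 4 * (k : ℤ) ^ 2 := by exact_mod_cast hnk
      have hbk' : (b : ℤ) = 4 * (k : ℤ) := by exact_mod_cast hbk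
      rw [hbk']
      rw [hlam0] at hsum
      linarith [hsum, hnk']
    have hmuid := row_eq_id hmu hmusum
    refine ⟨Or.inr rfl, ?_, ?_, ⟨k, by rw [hnk]; ring⟩⟩
    · intro hb0; exact absurd hb0 hb'
    · intro _
      refine ⟨hmuid, ?_, ?_, ?_⟩
      · rw [hbk, hnk]; ring
      · rw [hbk, hnk]
        have : 4 * k / 2 = 2 * k := by omega
        rw [this]; ring
      · rw [hbk]
        have : 4 * k / 2 = 2 * k := by omega
        rw [this]; exact ⟨k, rfl⟩
  · -- b = 0 : the lam row is the identity
    subst hb0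
    have ha' : a ≠ 0 := by
      rintro rfl
      simp at hdef
      omega
    have hta : (a : ℤ) = 4 * t := by push_cast at ht ⊢; linarith
    set k : ℕ := t.toNat with hk
    have htk : t = (k : ℤ) := by
      have hapos : (0 : ℤ) ≤ (a : ℤ) := by positivity
      rw [hk]; omega
    have hak : a = 4 * k := by
      have : (a : ℤ) = ((4 * k : ℕ) : ℤ) := by push_cast; rw [hta, htk]
      exact_mod_cast this
    have hnk : n = 4 * k ^ 2 := by
      have : (n : ℤ) = ((4 * k ^ 2 : ℕ) : ℤ) := by push_cast; rw [hnt, htk]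
      exact_mod_cast this
    have hmu0 : (∑ j : Fin 0, (mu j : ℤ)) = 0 := by simp
    have hfl : ((a : ℤ) + (0 : ℕ) - 1) ^ 2 / 4 = 4 * (k : ℤ) ^ 2 - 2 * k := by
      have hid : ((a : ℤ) + (0 : ℕ) - 1) ^ 2 = 4 * (4 * (k : ℤ) ^ 2 - 2 * k) + 1 := by
        have : (a : ℤ) = 4 * k := by exact_mod_cast hak
        rw [this]; push_cast; ring
      rw [hid]
      generalize (4 * (k : ℤ) ^ 2 - 2 * k) = x
      omega
    rw [hfl] at hsum
    have hlamsum : 2 * ∑ i, (lam i : ℤ) = (a : ℤ) ^ 2 - a := by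
      have hnk' : (n : ℤ) = 4 * (k : ℤ) ^ 2 := by exact_mod_cast hnk
      have hak' : (a : ℤ) = 4 * (k : ℤ) := by exact_mod_cast hak
      rw [hak']
      rw [hmu0] at hsum
      linarith [hsum, hnk']
    have hlamid := row_eq_id hlam hlamsum
    refine ⟨Or.inl rfl, ?_, ?_, ⟨k, by rw [hnk]; ring⟩⟩
    · intro _
      refine ⟨hlamid, ?_, ?_, ?_⟩
      · rw [hak, hnk]; ring
      · rw [hak, hnk]
        have : 4 * k / 2 = 2 * k := by omega
        rw [this]; ring
      · rw [hak]
        have : 4 * k / 2 = 2 * k := by omega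
        rw [this]; exact ⟨k, rfl⟩
    · intro ha0; exact absurd ha0 ha'
end
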